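/- arXiv:1107.2495 — 5 statements merged into one kernel-verified Lean document; each statement's English description precedes it below -/
import Mathlib

section
/- Let d ≥ 1 and D ≥ 1 be integers. There exist constants c > 0 and C, C' < ∞ depending only on d with the following property. Let P : ℝ² → ℝ^D be a vector-valued polynomial of degree ≤ d, let f, g : [0,1] → ℝ^D be measurable functions, and let E ⊆ [0,1]² be a measurable set of Lebesgue measure |E| = ε > 0 such that |f(x) + g(y) + P(x,y)| ≤ 1 for all (x,y) ∈ E. Then there exist ℝ^D-valued polynomials Q₁, Q₂ of degree ≤ d and measurable sets E₁, E₂ ⊆ [0,1] with |E₁| ≥ cε and |E₂| ≥ cε, such that |f(x) − Q₁(x)| ≤ C' ε^{-C} for all x ∈ E₁ and |g(y) − Q₂(y)| ≤ C' ε^{-C} for all y ∈ E₂. -/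
open MeasureTheory

noncomputable def euclNorm {D : ℕ} (v : Fin D → ℝ) : ℝ :=
  Real.sqrt (∑ i, v i ^ 2)

lemma aux_deg (p : MvPolynomial (Fin 2) ℝ) (s : Fin 2 → Polynomial ℝ)
    (hs : ∀ j, (s j).natDegree ≤ 1) :
    (MvPolynomial.eval₂ Polynomial.C s p).natDegree ≤ p.totalDegree := by
  rw [MvPolynomial.eval₂_eq']
  apply Polynomial.natDegree_sum_le_of_forall_le
  intro m hm
  have h1 : (m.sum fun _ e => e) ≤ p.totalDegree := MvPolynomial.le_totalDegree hm
  have h2 : ∑ j : Fin 2, m j = m.sum fun _ e => e :=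
    (Finsupp.sum_fintype m (fun _ e => e) (fun _ => rfl)).symm
  calc (Polynomial.C (MvPolynomial.coeff m p) * ∏ j, s j ^ m j).natDegree
      ≤ (Polynomial.C (MvPolynomial.coeff m p)).natDegree + (∏ j, s j ^ m j).natDegree :=
        Polynomial.natDegree_mul_le
    _ ≤ 0 + ∑ j : Fin 2, (s j ^ m j).natDegree := by
        gcongr
        · simp
        · exact Polynomial.natDegree_prod_le _ _
    _ ≤ ∑ j : Fin 2, m j := by
        rw [zero_add]
        apply Finset.sum_le_sum
        intro j _
        rw [Polynomial.natDegree_pow]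
        calc m j * (s j).natDegree ≤ m j * 1 := by gcongr; exact hs j
          _ = m j := mul_one _
    _ ≤ p.totalDegree := h2 ▸ h1

lemma aux_eval (p : MvPolynomial (Fin 2) ℝ) (s : Fin 2 → Polynomial ℝ) (x : ℝ) :
    Polynomial.eval x (MvPolynomial.eval₂ Polynomial.C s p)
      = MvPolynomial.eval (fun j => (s j).eval x) p := by
  rw [MvPolynomial.polynomial_eval_eval₂]
  have : (Polynomial.evalRingHom x).comp Polynomial.C = RingHom.id ℝ := by
    ext r; simp
  rw [this]
  rfl

lemma aux_slice (E : Set (ℝ × ℝ)) (hE : MeasurableSet E)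
    (hsub : E ⊆ Set.Icc (0:ℝ) 1 ×ˢ Set.Icc (0:ℝ) 1) (ε : ℝ) (hε : 0 < ε)
    (hvol : volume E = ENNReal.ofReal ε) :
    ∃ y₀ : ℝ, ENNReal.ofReal (ε/2) ≤ volume ((fun x => (x, y₀)) ⁻¹' E) := by
  by_contra h
  push_neg at h
  have key : volume E = ∫⁻ y, volume ((fun x => (x, y)) ⁻¹' E) := by
    rw [show (volume : Measure (ℝ × ℝ)) = (volume : Measure ℝ).prod volume from
      Measure.volume_eq_prod ℝ ℝ]
    exact Measure.prod_apply_symm hE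
  have hzero : ∀ y : ℝ, y ∉ Set.Icc (0:ℝ) 1 → ((fun x => (x, y)) ⁻¹' E) = ∅ := by
    intro y hy
    ext x
    simp only [Set.mem_preimage, Set.mem_empty_iff_false, iff_false]
    intro hxy
    exact hy (hsub hxy).2
  have hind : (fun y => volume ((fun x => (x, y)) ⁻¹' E))
      = Set.indicator (Set.Icc (0:ℝ) 1) (fun y => volume ((fun x => (x, y)) ⁻¹' E)) := by
    ext y
    by_cases hy : y ∈ Set.Icc (0:ℝ) 1
    · rw [Set.indicator_of_mem hy]
    · rw [Set.indicator_of_notMem hy, hzero y hy]; simp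
  have hle : volume E ≤ ENNReal.ofReal (ε/2) := by
    rw [key, hind, lintegral_indicator measurableSet_Icc]
    calc ∫⁻ y in Set.Icc (0:ℝ) 1, volume ((fun x => (x, y)) ⁻¹' E)
        ≤ ∫⁻ _ in Set.Icc (0:ℝ) 1, ENNReal.ofReal (ε/2) := by
          apply lintegral_mono
          intro y
          exact (h y).le
      _ = ENNReal.ofReal (ε/2) * volume (Set.Icc (0:ℝ) 1) := setLIntegral_const _ _
      _ = ENNReal.ofReal (ε/2) := by rw [Real.volume_Icc]; norm_num
  rw [hvol] at hle
  have : ε ≤ ε/2 := by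
    rwa [ENNReal.ofReal_le_ofReal_iff (by linarith)] at hle
  linarith

/-- Lemma "cousin": if `|f(x) + g(y) + P(x,y)| ≤ 1` on a subset `E` of the
unit square of measure `ε > 0`, with `P` an `ℝ^D`-valued polynomial of degree `≤ d`, then on
subsets `E₁, E₂ ⊆ [0,1]` of measure `≥ cε` the functions `f, g` lie within `C'ε^{-C}` of
`ℝ^D`-valued one-variable polynomials of degree `≤ d`. The constants `c, C, C'` depend only
on `d`. -/
theorem stmt_6 (d : ℕ) (hd : 1 ≤ d) :
    ∃ c C C' : ℝ, 0 < c ∧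
      ∀ D : ℕ, 1 ≤ D →
        ∀ P : Fin D → MvPolynomial (Fin 2) ℝ, (∀ i, (P i).totalDegree ≤ d) →
          ∀ f g : ℝ → (Fin D → ℝ), Measurable f → Measurable g →
            ∀ E : Set (ℝ × ℝ), MeasurableSet E →
              E ⊆ Set.Icc (0 : ℝ) 1 ×ˢ Set.Icc (0 : ℝ) 1 →
              ∀ ε : ℝ, 0 < ε → volume E = ENNReal.ofReal ε →
                (∀ p ∈ E, euclNorm (fun i =>
                    f p.1 i + g p.2 i + MvPolynomial.eval ![p.1, p.2] (P i)) ≤ 1) →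
                ∃ Q₁ Q₂ : Fin D → Polynomial ℝ,
                  (∀ i, (Q₁ i).natDegree ≤ d) ∧ (∀ i, (Q₂ i).natDegree ≤ d) ∧
                  ∃ E₁ E₂ : Set ℝ, MeasurableSet E₁ ∧ MeasurableSet E₂ ∧
                    E₁ ⊆ Set.Icc (0 : ℝ) 1 ∧ E₂ ⊆ Set.Icc (0 : ℝ) 1 ∧
                    ENNReal.ofReal (c * ε) ≤ volume E₁ ∧
                    ENNReal.ofReal (c * ε) ≤ volume E₂ ∧
                    (∀ x ∈ E₁, euclNorm (fun i => f x i - (Q₁ i).eval x)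
                      ≤ C' * ε ^ (-C)) ∧
                    (∀ y ∈ E₂, euclNorm (fun i => g y i - (Q₂ i).eval y)
                      ≤ C' * ε ^ (-C)) := by
  refine ⟨1/2, 1, 1, by norm_num, ?_⟩
  intro D hD P hP f g hf hg E hE hEsub ε hε hvol hbound
  -- ε ≤ 1
  have hε1 : ε ≤ 1 := by
    have h1 : ENNReal.ofReal ε ≤ volume (Set.Icc (0:ℝ) 1 ×ˢ Set.Icc (0:ℝ) 1) :=
      hvol ▸ measure_mono hEsub
    have h2 : volume (Set.Icc (0:ℝ) 1 ×ˢ Set.Icc (0:ℝ) 1) = 1 := by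
      rw [show (volume : Measure (ℝ × ℝ)) = (volume : Measure ℝ).prod volume from
        Measure.volume_eq_prod ℝ ℝ, Measure.prod_prod, Real.volume_Icc]
      norm_num
    rw [h2] at h1
    exact ENNReal.ofReal_le_one.mp h1
  -- the slice in y
  obtain ⟨y₀, hy₀⟩ := aux_slice E hE hEsub ε hε hvol
  -- the slice in x, via swap
  have hE' : MeasurableSet (Prod.swap ⁻¹' E : Set (ℝ × ℝ)) := measurable_swap hE
  have hsub' : (Prod.swap ⁻¹' E : Set (ℝ × ℝ)) ⊆ Set.Icc (0:ℝ) 1 ×ˢ Set.Icc (0:ℝ) 1 := by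
    intro q hq
    have := hEsub hq
    exact ⟨this.2, this.1⟩
  have hvol' : volume (Prod.swap ⁻¹' E : Set (ℝ × ℝ)) = ENNReal.ofReal ε := by
    rw [← hvol]
    exact Measure.measurePreserving_swap.measure_preimage hE.nullMeasurableSet
  obtain ⟨x₀, hx₀⟩ := aux_slice _ hE' hsub' ε hε hvol'
  -- the polynomials
  set s₁ : Fin 2 → Polynomial ℝ := ![Polynomial.X, Polynomial.C y₀] with hs₁
  set s₂ : Fin 2 → Polynomial ℝ := ![Polynomial.C x₀, Polynomial.X] with hs₂
  have hs₁d : ∀ j, (s₁ j).natDegree ≤ 1 := by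
    intro j; fin_cases j <;> simp [hs₁, Polynomial.natDegree_X_le]
  have hs₂d : ∀ j, (s₂ j).natDegree ≤ 1 := by
    intro j; fin_cases j <;> simp [hs₂, Polynomial.natDegree_X_le]
  refine ⟨fun i => -(Polynomial.C (g y₀ i) + MvPolynomial.eval₂ Polynomial.C s₁ (P i)),
          fun i => -(Polynomial.C (f x₀ i) + MvPolynomial.eval₂ Polynomial.C s₂ (P i)),
          ?_, ?_, ?_⟩
  · intro i
    rw [Polynomial.natDegree_neg]
    refine le_trans (Polynomial.natDegree_add_le _ _) (max_le (by simp) ?_)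
    exact le_trans (aux_deg (P i) s₁ hs₁d) (hP i)
  · intro i
    rw [Polynomial.natDegree_neg]
    refine le_trans (Polynomial.natDegree_add_le _ _) (max_le (by simp) ?_)
    exact le_trans (aux_deg (P i) s₂ hs₂d) (hP i)
  refine ⟨(fun x => (x, y₀)) ⁻¹' E, (fun y => (y, x₀)) ⁻¹' (Prod.swap ⁻¹' E),
    hE.preimage (measurable_id.prodMk measurable_const),
    hE'.preimage (measurable_id.prodMk measurable_const),
    ?_, ?_, ?_, ?_, ?_, ?_⟩
  · intro x hx; exact (hEsub hx).1
  · intro y hy; exact (hEsub hy).2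
  · rw [show (1:ℝ)/2 * ε = ε/2 by ring]; exact hy₀
  · rw [show (1:ℝ)/2 * ε = ε/2 by ring]; exact hx₀
  · intro x hx
    have hmem : (x, y₀) ∈ E := hx
    have hb := hbound (x, y₀) hmem
    have hQ : ∀ i, (-(Polynomial.C (g y₀ i)
        + MvPolynomial.eval₂ Polynomial.C s₁ (P i))).eval x
        = -(g y₀ i + MvPolynomial.eval ![x, y₀] (P i)) := by
      intro i
      rw [Polynomial.eval_neg, Polynomial.eval_add, Polynomial.eval_C, aux_eval,
        show (fun j => Polynomial.eval x (s₁ j)) = ![x, y₀] by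
          funext j; fin_cases j <;> simp [hs₁]]
    have heq : (fun i => f x i - (-(Polynomial.C (g y₀ i)
        + MvPolynomial.eval₂ Polynomial.C s₁ (P i))).eval x)
        = fun i => f x i + g y₀ i + MvPolynomial.eval ![x, y₀] (P i) := by
      funext i; rw [hQ i]; ring
    rw [heq]
    have h1e : (1:ℝ) ≤ ε ^ (-(1:ℝ)) := by
      rw [Real.rpow_neg_one]
      have hme : ε * ε⁻¹ = 1 := mul_inv_cancel₀ hε.ne'
      nlinarith
    calc euclNorm (fun i => f x i + g y₀ i + MvPolynomial.eval ![x, y₀] (P i)) ≤ 1 := hb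
      _ ≤ 1 * ε ^ (-(1:ℝ)) := by rw [one_mul]; exact h1e
  · intro y hy
    have hmem : (x₀, y) ∈ E := hy
    have hb := hbound (x₀, y) hmem
    have hQ : ∀ i, (-(Polynomial.C (f x₀ i)
        + MvPolynomial.eval₂ Polynomial.C s₂ (P i))).eval y
        = -(f x₀ i + MvPolynomial.eval ![x₀, y] (P i)) := by
      intro i
      rw [Polynomial.eval_neg, Polynomial.eval_add, Polynomial.eval_C, aux_eval,
        show (fun j => Polynomial.eval y (s₂ j)) = ![x₀, y] by
          funext j; fin_cases j <;> simp [hs₂]]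
    have heq : (fun i => g y i - (-(Polynomial.C (f x₀ i)
        + MvPolynomial.eval₂ Polynomial.C s₂ (P i))).eval y)
        = fun i => f x₀ i + g y i + MvPolynomial.eval ![x₀, y] (P i) := by
      funext i; rw [hQ i]; ring
    rw [heq]
    have h1e : (1:ℝ) ≤ ε ^ (-(1:ℝ)) := by
      rw [Real.rpow_neg_one]
      have hme : ε * ε⁻¹ = 1 := mul_inv_cancel₀ hε.ne'
      nlinarith
    calc euclNorm (fun i => f x₀ i + g y i + MvPolynomial.eval ![x₀, y] (P i)) ≤ 1 := hb
      _ ≤ 1 * ε ^ (-(1:ℝ)) := by rw [one_mul]; exact h1e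
end

section
/- Let X be a normed linear space, let (Ω, μ) and (Ω', μ') be probability spaces, and let f : Ω → X and f' : Ω' → X be functions. Let 0 < r < 1 and 0 < R < ∞, and let E ⊆ Ω × Ω' be a measurable set with (μ × μ')(E) ≥ r such that ‖f(x) − f'(x')‖ ≤ R for all (x,x') ∈ E. Then there exist a ∈ X and measurable sets G ⊆ Ω and G' ⊆ Ω' with μ(G) ≥ r/4 and μ'(G') ≥ r/4, such that ‖f(x) − a‖ ≤ (3/2) R for all x ∈ G and ‖f'(x') − a‖ ≤ (3/2) R for all x' ∈ G'. -/
/-!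
Fibres `E^{x'} = {x | (x, x') ∈ E}` of measure `< r/2` carry at most `r/2` of the mass of `E`, so
the part of `E` over the `x'` with `μ(E^{x'}) ≥ r/2` still has mass `≥ r/2`. Within it, by the same
averaging, a set of `x` of measure `≥ r/4` has fibres of measure `≥ r/4`. Picking such an `x₀` and
a point `x₀'` of its fibre gives `(x₀, x₀') ∈ E` with both fibres large, and the midpoint `a` of
`f x₀` and `f' x₀'` works: every `x ∈ E^{x₀'}` has `f x` within `R` of `f' x₀'`, which is within
`R/2` of `a`, and symmetrically for the fibre over `x₀`.
-/

open MeasureTheory ENNReal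

theorem le_setLIntegral_of_add_le_lintegral {α : Type*} [MeasurableSpace α] {ν : Measure α}
    [IsFiniteMeasure ν] {g : α → ℝ≥0∞} (hg : Measurable g) {a c : ℝ≥0∞} (hc : c ≠ ∞)
    (h : a + c * ν Set.univ ≤ ∫⁻ x, g x ∂ν) :
    a ≤ ∫⁻ x in {x | c ≤ g x}, g x ∂ν := by
  have hsmall : ∫⁻ x in {x | c ≤ g x}ᶜ, g x ∂ν ≤ c * ν Set.univ :=
    calc ∫⁻ x in {x | c ≤ g x}ᶜ, g x ∂ν ≤ ∫⁻ _ in {x | c ≤ g x}ᶜ, c ∂ν :=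
          setLIntegral_mono measurable_const fun x hx => le_of_not_ge hx
      _ ≤ c * ν Set.univ := by
          rw [setLIntegral_const]
          gcongr
          exact Set.subset_univ _
  refine ENNReal.le_of_add_le_add_right (mul_ne_top hc (measure_ne_top ν Set.univ)) ?_
  calc a + c * ν Set.univ ≤ ∫⁻ x, g x ∂ν := h
    _ = ∫⁻ x in {x | c ≤ g x}, g x ∂ν + ∫⁻ x in {x | c ≤ g x}ᶜ, g x ∂ν :=
        (lintegral_add_compl g (measurableSet_le measurable_const hg)).symm
    _ ≤ _ := by gcongr

theorem exists_mem_of_four_mul_le_measure_prod {α β : Type*} [MeasurableSpace α]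
    [MeasurableSpace β] {μ : Measure α} {ν : Measure β} [IsProbabilityMeasure μ]
    [IsProbabilityMeasure ν] {E : Set (α × β)} (hE : MeasurableSet E) {t : ℝ≥0∞} (ht : t ≠ 0)
    (hEt : 4 * t ≤ μ.prod ν E) :
    ∃ x y, (x, y) ∈ E ∧ t ≤ μ {x' | (x', y) ∈ E} ∧
      ∃ G' ⊆ {y' | (x, y') ∈ E}, MeasurableSet G' ∧ t ≤ ν G' := by
  have ht_top : t ≠ ∞ := by
    rintro rfl
    have := hEt.trans prob_le_one
    simp at this
  set B : Set β := {y | 2 * t ≤ μ ((fun x => (x, y)) ⁻¹' E)}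
  have hB : MeasurableSet B := measurableSet_le measurable_const (measurable_measure_prodMk_right hE)
  have hEB : 2 * t ≤ μ.prod (ν.restrict B) E := by
    rw [Measure.prod_apply_symm hE]
    refine le_setLIntegral_of_add_le_lintegral (measurable_measure_prodMk_right hE)
      (mul_ne_top ofNat_ne_top ht_top) ?_
    rw [measure_univ, mul_one, ← Measure.prod_apply_symm hE, ← add_mul, two_add_two_eq_four]
    exact hEt
  set A : Set α := {x | t ≤ ν.restrict B (Prod.mk x ⁻¹' E)}
  have hA : t ≤ μ A :=
    calc t ≤ ∫⁻ x in A, ν.restrict B (Prod.mk x ⁻¹' E) ∂μ := by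
          refine le_setLIntegral_of_add_le_lintegral (measurable_measure_prodMk_left hE) ht_top ?_
          rw [measure_univ, mul_one, ← two_mul, ← Measure.prod_apply hE]
          exact hEB
      _ ≤ ∫⁻ _ in A, 1 ∂μ :=
          setLIntegral_mono measurable_const fun x _ =>
            (Measure.restrict_apply_le B _).trans prob_le_one
      _ = μ A := by rw [setLIntegral_const, one_mul]
  obtain ⟨x₀, hx₀⟩ := nonempty_of_measure_ne_zero (ne_bot_of_le_ne_bot ht hA)
  have hfibre : t ≤ ν (Prod.mk x₀ ⁻¹' E ∩ B) := by
    rwa [← Measure.restrict_apply' hB]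
  obtain ⟨y₀, hy₀E, hy₀B⟩ := nonempty_of_measure_ne_zero (ne_bot_of_le_ne_bot ht hfibre)
  refine ⟨x₀, y₀, hy₀E, ?_, _, Set.inter_subset_left,
    (measurable_prodMk_left hE).inter hB, hfibre⟩
  calc t ≤ 2 * t := le_mul_of_one_le_left' one_le_two
    _ ≤ _ := hy₀B

theorem dist_midpoint_le_of_dist_le {X : Type*} [SeminormedAddCommGroup X] [NormedSpace ℝ X]
    {x u v : X} {R : ℝ} (hxv : dist x v ≤ R) (huv : dist u v ≤ R) :
    dist x (midpoint ℝ u v) ≤ 3 / 2 * R :=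
  calc dist x (midpoint ℝ u v) ≤ dist x v + dist v (midpoint ℝ u v) := dist_triangle _ _ _
    _ = dist x v + dist u v / 2 := by rw [dist_right_midpoint]; norm_num; ring
    _ ≤ 3 / 2 * R := by linarith

theorem stmt_7_general {X : Type*} [NormedAddCommGroup X] [NormedSpace ℝ X]
    {Ω Ω' : Type*} [MeasurableSpace Ω] [MeasurableSpace Ω']
    (μ : Measure Ω) (μ' : Measure Ω') [IsProbabilityMeasure μ] [IsProbabilityMeasure μ']
    (f : Ω → X) (f' : Ω' → X) (r R : ℝ) (hr0 : 0 < r)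
    (E : Set (Ω × Ω')) (hE : MeasurableSet E)
    (hEr : ENNReal.ofReal r ≤ μ.prod μ' E)
    (hfE : ∀ p ∈ E, ‖f p.1 - f' p.2‖ ≤ R) :
    ∃ a : X, ∃ G : Set Ω, ∃ G' : Set Ω',
      MeasurableSet G ∧ MeasurableSet G' ∧
      ENNReal.ofReal (r / 4) ≤ μ G ∧ ENNReal.ofReal (r / 4) ≤ μ' G' ∧
      (∀ x ∈ G, ‖f x - a‖ ≤ (3 / 2) * R) ∧
      (∀ x' ∈ G', ‖f' x' - a‖ ≤ (3 / 2) * R) := by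
  have hfour : 4 * ENNReal.ofReal (r / 4) ≤ μ.prod μ' E := by
    rwa [← ofReal_ofNat 4, ← ofReal_mul (by norm_num), mul_div_cancel₀ r four_ne_zero]
  obtain ⟨x₀, x₀', hx₀E, hG, G', hG'E, hG'm, hG'⟩ :=
    exists_mem_of_four_mul_le_measure_prod hE (ofReal_pos.mpr (by positivity)).ne' hfour
  have hdist : ∀ {x x'}, (x, x') ∈ E → dist (f x) (f' x') ≤ R := fun h => by
    simpa only [dist_eq_norm] using hfE _ h
  refine ⟨midpoint ℝ (f x₀) (f' x₀'), _, G', measurable_prodMk_right hE, hG'm, hG, hG',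
    fun x hx => ?_, fun x' hx' => ?_⟩
  · rw [← dist_eq_norm]
    exact dist_midpoint_le_of_dist_le (hdist hx) (hdist hx₀E)
  · rw [← dist_eq_norm, midpoint_comm]
    exact dist_midpoint_le_of_dist_le (dist_comm (f x₀) _ ▸ hdist (hG'E hx'))
      (dist_comm (f x₀) _ ▸ hdist hx₀E)

/-- Lemma "frust": if `‖f(x) − f'(x')‖ ≤ R` on a subset `E` of
`Ω × Ω'` of product measure `≥ r`, then there are a point `a ∈ X` and sets `G ⊆ Ω`,
`G' ⊆ Ω'` of measures `≥ r/4` on which `f`, resp. `f'`, is within `(3/2)R` of `a`. -/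
theorem stmt_7 {X : Type*} [NormedAddCommGroup X] [NormedSpace ℝ X]
    {Ω Ω' : Type*} [MeasurableSpace Ω] [MeasurableSpace Ω']
    (μ : Measure Ω) (μ' : Measure Ω') [IsProbabilityMeasure μ] [IsProbabilityMeasure μ']
    (f : Ω → X) (f' : Ω' → X) (r R : ℝ) (hr0 : 0 < r) (hr1 : r < 1) (hR : 0 < R)
    (E : Set (Ω × Ω')) (hE : MeasurableSet E)
    (hEr : ENNReal.ofReal r ≤ μ.prod μ' E)
    (hfE : ∀ p ∈ E, ‖f p.1 - f' p.2‖ ≤ R) :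
    ∃ a : X, ∃ G : Set Ω, ∃ G' : Set Ω',
      MeasurableSet G ∧ MeasurableSet G' ∧
      ENNReal.ofReal (r / 4) ≤ μ G ∧ ENNReal.ofReal (r / 4) ≤ μ' G' ∧
      (∀ x ∈ G, ‖f x - a‖ ≤ (3 / 2) * R) ∧
      (∀ x' ∈ G', ‖f' x' - a‖ ≤ (3 / 2) * R) :=
  stmt_7_general μ μ' f f' r R hr0 E hE hEr hfE
end

section
/- For every integer d ≥ 1 there exists c > 0 with the following property. Let P̃ : ℝ⁴ → ℝ be a polynomial of degree ≤ d in the variables (x₁,y₁,x₂,y₂). Set P₀(x₂,y₂) := P̃(0,0,x₂,y₂) and P* := P̃ − P₀, and write P*(x,y) = Σ_{(j,k)≠(0,0)} q_{jk}(x₂,y₂) x₁^j y₁^k with q_{jk} polynomials in (x₂,y₂). Then (Σ_{(j,k)≠(0,0)} ‖q_{jk}‖²)^{1/2} + ‖P₀‖_nd ≥ c ‖P̃‖_nd, where ‖q_{jk}‖ is the ℓ² coefficient norm of q_{jk}, ‖P₀‖_nd is the nondegeneracy norm of P₀ as a polynomial in (x₂,y₂) with respect to the maps (x₂,y₂) ↦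 x₂, y₂, x₂+y₂, and ‖P̃‖_nd is the nondegeneracy norm of P̃ with respect to the maps (x₁,y₁,x₂,y₂) ↦ (x₁,x₂), (y₁,y₂), (x₁+y₁,x₂+y₂). -/
/-! One can take `c = 1`. A triple `p₁(x₂), p₂(y₂), p₃(x₂ + y₂)` of one-variable polynomials
competing in `‖P₀‖_nd` also competes in `‖P̃‖_nd`, read as two-variable polynomials in the
second coordinates, and the triangle inequality for the coefficient norm splits
`P̃ − p₁ − p₂ − p₃` into `P*` and `P₀ − p₁ − p₂ − p₃`. -/

open MvPolynomial

/-- The ℓ² norm of the vector of coefficients of a polynomial. -/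
noncomputable def coeffNorm {σ : Type*} (p : MvPolynomial σ ℝ) : ℝ :=
  Real.sqrt (∑ α ∈ p.support, (p.coeff α) ^ 2)

/-- Nondegeneracy norm of a two-variable polynomial `p(s,t)` relative to the maps
`(s,t) ↦ s, t, s+t`. -/
noncomputable def ndNorm2 (d : ℕ) (p : MvPolynomial (Fin 2) ℝ) : ℝ :=
  sInf { r : ℝ | ∃ p₁ p₂ p₃ : Polynomial ℝ,
    p₁.natDegree ≤ d ∧ p₂.natDegree ≤ d ∧ p₃.natDegree ≤ d ∧
    r = coeffNorm (p - Polynomial.aeval (MvPolynomial.X 0) p₁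
      - Polynomial.aeval (MvPolynomial.X 1) p₂
      - Polynomial.aeval (MvPolynomial.X 0 + MvPolynomial.X 1) p₃) }

/-- Nondegeneracy norm of a four-variable polynomial `P(x₁,y₁,x₂,y₂)` (variables indexed
`0 ↦ x₁`, `1 ↦ y₁`, `2 ↦ x₂`, `3 ↦ y₂`) relative to the three maps
`(x₁,y₁,x₂,y₂) ↦ (x₁,x₂), (y₁,y₂), (x₁+y₁,x₂+y₂)`: the infimum of
`‖P − p₁(x₁,x₂) − p₂(y₁,y₂) − p₃(x₁+y₁,x₂+y₂)‖` over two-variable polynomials `p₁,p₂,p₃` of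
degree `≤ d`. -/
noncomputable def ndNorm4 (d : ℕ) (P : MvPolynomial (Fin 4) ℝ) : ℝ :=
  sInf { r : ℝ | ∃ p₁ p₂ p₃ : MvPolynomial (Fin 2) ℝ,
    p₁.totalDegree ≤ d ∧ p₂.totalDegree ≤ d ∧ p₃.totalDegree ≤ d ∧
    r = coeffNorm (P
      - MvPolynomial.aeval ![MvPolynomial.X 0, MvPolynomial.X 2] p₁
      - MvPolynomial.aeval ![MvPolynomial.X 1, MvPolynomial.X 3] p₂
      - MvPolynomial.aeval ![MvPolynomial.X 0 + MvPolynomial.X 1,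
          MvPolynomial.X 2 + MvPolynomial.X 3] p₃) }

section CoeffNorm

variable {σ : Type*}

lemma coeffNorm_nonneg (p : MvPolynomial σ ℝ) : 0 ≤ coeffNorm p :=
  Real.sqrt_nonneg _

lemma coeffNorm_eq_norm_toLp (p : MvPolynomial σ ℝ) {S : Finset (σ →₀ ℕ)}
    (h : p.support ⊆ S) :
    coeffNorm p = ‖(WithLp.toLp 2 fun α : S => p.coeff α : EuclideanSpace ℝ S)‖ := by
  rw [coeffNorm, EuclideanSpace.norm_eq, Finset.sum_subset h fun α _ hα => by
    rw [notMem_support_iff.mp hα, sq, mul_zero]]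
  simp [Real.norm_eq_abs, sq_abs, Finset.sum_attach S fun α => p.coeff α ^ 2]

lemma coeffNorm_add_le (p q : MvPolynomial σ ℝ) :
    coeffNorm (p + q) ≤ coeffNorm p + coeffNorm q := by
  classical
  rw [coeffNorm_eq_norm_toLp (p + q) support_add,
    coeffNorm_eq_norm_toLp p Finset.subset_union_left,
    coeffNorm_eq_norm_toLp q Finset.subset_union_right]
  refine le_of_eq_of_le ?_ (norm_add_le _ _)
  congr 1

lemma coeffNorm_rename {τ : Type*} {g : σ → τ} (hg : Function.Injective g)
    (p : MvPolynomial σ ℝ) : coeffNorm (rename g p) = coeffNorm p := by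
  classical
  rw [coeffNorm, coeffNorm, support_rename_of_injective hg,
    Finset.sum_image fun _ _ _ _ h => Finsupp.mapDomain_injective hg h]
  simp only [coeff_rename_mapDomain g hg]

end CoeffNorm

lemma totalDegree_aeval_X_le {R σ : Type*} [CommSemiring R] [Nontrivial R] (i : σ)
    (p : Polynomial R) :
    (Polynomial.aeval (X i : MvPolynomial σ R) p).totalDegree ≤ p.natDegree := by
  rw [Polynomial.aeval_eq_sum_range]
  refine (totalDegree_finsetSum _ _).trans (Finset.sup_le fun k hk => ?_)
  calc (p.coeff k • (X i : MvPolynomial σ R) ^ k).totalDegree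
      ≤ ((X i : MvPolynomial σ R) ^ k).totalDegree := totalDegree_smul_le _ _
    _ = k := totalDegree_X_pow _ _
    _ ≤ p.natDegree := Finset.mem_range_succ_iff.mp hk

lemma ndNorm4_le (d : ℕ) (P : MvPolynomial (Fin 4) ℝ) {p₁ p₂ p₃ : MvPolynomial (Fin 2) ℝ}
    (h₁ : p₁.totalDegree ≤ d) (h₂ : p₂.totalDegree ≤ d) (h₃ : p₃.totalDegree ≤ d) :
    ndNorm4 d P ≤ coeffNorm (P
      - aeval ![X 0, X 2] p₁ - aeval ![X 1, X 3] p₂ - aeval ![X 0 + X 1, X 2 + X 3] p₃) :=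
  csInf_le ⟨0, by rintro r ⟨_, _, _, _, _, _, rfl⟩; exact coeffNorm_nonneg _⟩
    ⟨p₁, p₂, p₃, h₁, h₂, h₃, rfl⟩

lemma ndNorm4_le_coeffNorm_sub_rename_add_ndNorm2 (d : ℕ) (P : MvPolynomial (Fin 4) ℝ)
    (Q : MvPolynomial (Fin 2) ℝ) :
    ndNorm4 d P ≤ coeffNorm (P - rename ![2, 3] Q) + ndNorm2 d Q := by
  rw [← sub_le_iff_le_add']
  refine le_csInf ⟨_, 0, 0, 0, by simp, by simp, by simp, rfl⟩ ?_
  rintro r ⟨p₁, p₂, p₃, h₁, h₂, h₃, rfl⟩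
  rw [sub_le_iff_le_add']
  have hinj : Function.Injective (![2, 3] : Fin 2 → Fin 4) := by decide
  calc ndNorm4 d P
      ≤ coeffNorm (P - aeval ![X 0, X 2] (Polynomial.aeval (X 1) p₁)
          - aeval ![X 1, X 3] (Polynomial.aeval (X 1) p₂)
          - aeval ![X 0 + X 1, X 2 + X 3] (Polynomial.aeval (X 1) p₃)) :=
        ndNorm4_le d P ((totalDegree_aeval_X_le _ _).trans h₁)
          ((totalDegree_aeval_X_le _ _).trans h₂) ((totalDegree_aeval_X_le _ _).trans h₃)
    _ = coeffNorm ((P - rename ![2, 3] Q) + rename ![2, 3] (Q - Polynomial.aeval (X 0) p₁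
          - Polynomial.aeval (X 1) p₂ - Polynomial.aeval (X 0 + X 1) p₃)) := by
        simp only [aeval_eq_bind₁, ← Polynomial.aeval_algHom_apply, bind₁_X_right, map_sub,
          map_add, rename_X, Matrix.cons_val_zero, Matrix.cons_val_one, Matrix.cons_val_fin_one]
        congr 1
        abel
    _ ≤ _ := by
        rw [← coeffNorm_rename hinj (Q - _ - _ - _)]
        exact coeffNorm_add_le _ _

/-- `coeffNorm P*` is the paper's `(∑_{(j,k)≠(0,0)} ‖q_{jk}‖²)^{1/2}`: the coefficients of `P*`
are partitioned by the exponents `(j,k)` of `x₁, y₁`. -/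
theorem stmt_9_general (d : ℕ) :
    ∃ c : ℝ, 0 < c ∧
      ∀ P : MvPolynomial (Fin 4) ℝ, P.totalDegree ≤ d →
        coeffNorm (P - MvPolynomial.aeval
            ![(0 : MvPolynomial (Fin 4) ℝ), 0, MvPolynomial.X 2, MvPolynomial.X 3] P)
          + ndNorm2 d (MvPolynomial.aeval
              ![(0 : MvPolynomial (Fin 2) ℝ), 0, MvPolynomial.X 0, MvPolynomial.X 1] P)
        ≥ c * ndNorm4 d P := by
  refine ⟨1, one_pos, fun P _ => ?_⟩
  have hP₀ : aeval ![(0 : MvPolynomial (Fin 4) ℝ), 0, X 2, X 3] P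
      = rename ![2, 3] (aeval ![(0 : MvPolynomial (Fin 2) ℝ), 0, X 0, X 1] P) := by
    rw [← AlgHom.comp_apply, comp_aeval]
    congr 2
    funext i
    fin_cases i <;> simp
  rw [one_mul, hP₀]
  exact ndNorm4_le_coeffNorm_sub_rename_add_ndNorm2 d P _

/-- the key lemma of Section 6: with `P₀(x₂,y₂) := P̃(0,0,x₂,y₂)` and
`P* := P̃ − P₀`, one has `‖P*‖ + ‖P₀‖_nd ≥ c‖P̃‖_nd`. Here `coeffNorm P*` is precisely
`(∑_{(j,k)≠(0,0)} ‖q_{jk}‖²)^{1/2}`, where `P* = ∑_{(j,k)≠(0,0)} q_{jk}(x₂,y₂)x₁ʲy₁ᵏ`,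
since the ℓ² norm of all the coefficients of `P*` splits over the groups `(j,k)`. -/
theorem stmt_9 (d : ℕ) (hd : 1 ≤ d) :
    ∃ c : ℝ, 0 < c ∧
      ∀ P : MvPolynomial (Fin 4) ℝ, P.totalDegree ≤ d →
        coeffNorm (P - MvPolynomial.aeval
            ![(0 : MvPolynomial (Fin 4) ℝ), 0, MvPolynomial.X 2, MvPolynomial.X 3] P)
          + ndNorm2 d (MvPolynomial.aeval
              ![(0 : MvPolynomial (Fin 2) ℝ), 0, MvPolynomial.X 0, MvPolynomial.X 1] P)
        ≥ c * ndNorm4 d P :=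
  stmt_9_general d
end

section
/- Let g₁, g₂, g₃ ∈ L²(ℝ) be nonnegative measurable functions and let E ⊆ ℝ² be a measurable set of finite Lebesgue measure |E|. Then ∬_E g₁(x) g₂(y) g₃(x+y) dx dy ≤ |E|^{1/4} ‖g₁‖_{L²(ℝ)} ‖g₂‖_{L²(ℝ)} ‖g₃‖_{L²(ℝ)}. -/
open MeasureTheory ENNReal

/-!
Replacing each `gᵢ` by `|gᵢ|`, write the integrand as `w · h` with
`w(x, y) = g₁(x) g₂(y)` and `h(x, y) = g₃(x + y)`.
Cauchy–Schwarz for the measure `w dx dy` on `E` gives `(∫_E w h)² ≤ (∫_E w) (∫_E w h²)`.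
Since `‖w‖_{L²(ℝ²)} = ‖g₁‖₂ ‖g₂‖₂`, Cauchy–Schwarz against `1_E` bounds the first factor by
`|E|^{1/2} ‖g₁‖₂ ‖g₂‖₂`. In the second, the substitution `u = x + y` turns the integral into
`∫ g₃(u)² (g₁ ⋆ g₂)(u) du`, and the convolution is bounded pointwise by `‖g₁‖₂ ‖g₂‖₂`, so it is
at most `‖g₁‖₂ ‖g₂‖₂ ‖g₃‖₂²`. Only the invariance of Lebesgue measure under `x ↦ u - x` and
`(x, y) ↦ (x, x + y)` is used, so the argument runs on any abelian group with such a measure.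
-/

section CauchySchwarz

variable {α : Type*} [MeasurableSpace α] {μ : Measure α}

theorem sq_eLpNorm_two_eq_lintegral_sq (f : α → ℝ≥0∞) :
    eLpNorm f 2 μ ^ 2 = ∫⁻ a, f a ^ 2 ∂μ := by
  have h := eLpNorm_nnreal_pow_eq_lintegral (f := f) (μ := μ) (p := 2) two_ne_zero
  simp only [NNReal.coe_ofNat, ENNReal.rpow_two, enorm_eq_self] at h
  exact_mod_cast h

theorem lintegral_mul_le_eLpNorm_two_mul_eLpNorm_two {f g : α → ℝ≥0∞}
    (hf : AEMeasurable f μ) (hg : AEMeasurable g μ) :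
    ∫⁻ a, f a * g a ∂μ ≤ eLpNorm f 2 μ * eLpNorm g 2 μ := by
  simpa [eLpNorm_eq_lintegral_rpow_enorm_toReal] using
    ENNReal.lintegral_mul_le_Lp_mul_Lq μ Real.HolderConjugate.two_two hf hg

theorem sq_lintegral_mul_le_lintegral_mul_lintegral_mul_sq {w f : α → ℝ≥0∞}
    (hw : AEMeasurable w μ) (hf : AEMeasurable f μ) :
    (∫⁻ a, w a * f a ∂μ) ^ 2 ≤ (∫⁻ a, w a ∂μ) * ∫⁻ a, w a * f a ^ 2 ∂μ := by
  set r : α → ℝ≥0∞ := fun a ↦ w a ^ ((2 : ℕ) : ℝ)⁻¹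
  have hr : ∀ a, r a ^ 2 = w a := fun a ↦ ENNReal.rpow_inv_natCast_pow two_ne_zero (w a)
  have hr_meas : AEMeasurable r μ := hw.pow_const _
  calc (∫⁻ a, w a * f a ∂μ) ^ 2 = (∫⁻ a, r a * (r a * f a) ∂μ) ^ 2 := by
        simp_rw [← mul_assoc, ← sq, hr]
    _ ≤ (eLpNorm r 2 μ * eLpNorm (fun a ↦ r a * f a) 2 μ) ^ 2 := by
        gcongr
        exact lintegral_mul_le_eLpNorm_two_mul_eLpNorm_two hr_meas (hr_meas.mul hf)
    _ = (∫⁻ a, w a ∂μ) * ∫⁻ a, w a * f a ^ 2 ∂μ := by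
        simp_rw [mul_pow, sq_eLpNorm_two_eq_lintegral_sq, mul_pow, hr]

theorem setLIntegral_le_measure_rpow_mul_eLpNorm_two {f : α → ℝ≥0∞} (hf : AEMeasurable f μ)
    (s : Set α) : ∫⁻ a in s, f a ∂μ ≤ μ s ^ (1 / 2 : ℝ) * eLpNorm f 2 μ := by
  have h := eLpNorm_le_eLpNorm_mul_rpow_measure_univ (one_le_two : (1 : ℝ≥0∞) ≤ 2)
    (hf.restrict (s := s)).aestronglyMeasurable
  rw [eLpNorm_one_eq_lintegral_enorm, Measure.restrict_apply_univ] at h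
  norm_num at h
  rw [mul_comm]
  exact h.trans (by gcongr; exact Measure.restrict_le_self)

theorem eLpNorm_two_prod_mul {β : Type*} [MeasurableSpace β] {ν : Measure β} [SFinite ν]
    {f : α → ℝ≥0∞} {g : β → ℝ≥0∞} (hf : AEMeasurable f μ) (hg : AEMeasurable g ν) :
    eLpNorm (fun p : α × β ↦ f p.1 * g p.2) 2 (μ.prod ν) = eLpNorm f 2 μ * eLpNorm g 2 ν := by
  apply (ENNReal.pow_right_strictMono two_ne_zero).injective
  simp only [mul_pow, sq_eLpNorm_two_eq_lintegral_sq]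
  exact lintegral_prod_mul (hf.pow_const 2) (hg.pow_const 2)

end CauchySchwarz

section Convolution

variable {G : Type*} [MeasurableSpace G] [AddCommGroup G] [MeasurableAdd₂ G] [MeasurableNeg G]
  {μ : Measure G} [μ.IsAddLeftInvariant] [μ.IsNegInvariant]

theorem lintegral_mul_comp_sub_le {f g : G → ℝ≥0∞} (hf : AEMeasurable f μ)
    (hg : AEMeasurable g μ) (u : G) :
    ∫⁻ x, f x * g (u - x) ∂μ ≤ eLpNorm f 2 μ * eLpNorm g 2 μ := by
  have h_sub := Measure.measurePreserving_sub_left μ u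
  calc ∫⁻ x, f x * g (u - x) ∂μ ≤ eLpNorm f 2 μ * eLpNorm (g ∘ (u - ·)) 2 μ :=
        lintegral_mul_le_eLpNorm_two_mul_eLpNorm_two hf
          (hg.comp_quasiMeasurePreserving h_sub.quasiMeasurePreserving)
    _ = eLpNorm f 2 μ * eLpNorm g 2 μ := by
        rw [eLpNorm_comp_measurePreserving hg.aestronglyMeasurable h_sub]

variable [SFinite μ] {f₁ f₂ f₃ : G → ℝ≥0∞}

theorem lintegral_prod_mul_mul_comp_add_sq_le (h₁ : Measurable f₁) (h₂ : Measurable f₂)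
    (h₃ : Measurable f₃) :
    ∫⁻ p, f₁ p.1 * f₂ p.2 * f₃ (p.1 + p.2) ^ 2 ∂μ.prod μ ≤
      eLpNorm f₁ 2 μ * eLpNorm f₂ 2 μ * eLpNorm f₃ 2 μ ^ 2 := by
  calc ∫⁻ p, f₁ p.1 * f₂ p.2 * f₃ (p.1 + p.2) ^ 2 ∂μ.prod μ
      = ∫⁻ p, f₃ p.2 ^ 2 * (f₁ p.1 * f₂ (p.2 - p.1)) ∂μ.prod μ := by
        rw [← (measurePreserving_prod_add μ μ).lintegral_comp
          (by fun_prop : Measurable fun p : G × G ↦ f₃ p.2 ^ 2 * (f₁ p.1 * f₂ (p.2 - p.1)))]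
        simp only [add_sub_cancel_left]
        congr 1 with p
        ring
    _ = ∫⁻ u, f₃ u ^ 2 * ∫⁻ x, f₁ x * f₂ (u - x) ∂μ ∂μ := by
        rw [lintegral_prod_symm _ (by fun_prop)]
        congr 1 with u
        dsimp only
        exact lintegral_const_mul _ (by fun_prop : Measurable fun x ↦ f₁ x * f₂ (u - x))
    _ ≤ ∫⁻ u, f₃ u ^ 2 * (eLpNorm f₁ 2 μ * eLpNorm f₂ 2 μ) ∂μ := by
        gcongr with u
        exact lintegral_mul_comp_sub_le h₁.aemeasurable h₂.aemeasurable u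
    _ = eLpNorm f₁ 2 μ * eLpNorm f₂ 2 μ * eLpNorm f₃ 2 μ ^ 2 := by
        rw [lintegral_mul_const _ (by fun_prop), sq_eLpNorm_two_eq_lintegral_sq, mul_comm]

theorem setLIntegral_prod_mul_mul_comp_add_le_of_measurable (h₁ : Measurable f₁)
    (h₂ : Measurable f₂) (h₃ : Measurable f₃) (s : Set (G × G)) :
    ∫⁻ p in s, f₁ p.1 * f₂ p.2 * f₃ (p.1 + p.2) ∂μ.prod μ ≤
      μ.prod μ s ^ (1 / 4 : ℝ) * (eLpNorm f₁ 2 μ * eLpNorm f₂ 2 μ * eLpNorm f₃ 2 μ) := by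
  have h_sq := sq_lintegral_mul_le_lintegral_mul_lintegral_mul_sq (μ := (μ.prod μ).restrict s)
    (w := fun p ↦ f₁ p.1 * f₂ p.2) (f := fun p ↦ f₃ (p.1 + p.2)) (by fun_prop) (by fun_prop)
  have h_weight : ∫⁻ p in s, f₁ p.1 * f₂ p.2 ∂μ.prod μ ≤
      μ.prod μ s ^ (1 / 2 : ℝ) * (eLpNorm f₁ 2 μ * eLpNorm f₂ 2 μ) := by
    rw [← eLpNorm_two_prod_mul h₁.aemeasurable h₂.aemeasurable]
    exact setLIntegral_le_measure_rpow_mul_eLpNorm_two (by fun_prop) s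
  have h_weighted_sq : ∫⁻ p in s, f₁ p.1 * f₂ p.2 * f₃ (p.1 + p.2) ^ 2 ∂μ.prod μ ≤
      eLpNorm f₁ 2 μ * eLpNorm f₂ 2 μ * eLpNorm f₃ 2 μ ^ 2 :=
    (setLIntegral_le_lintegral _ _).trans (lintegral_prod_mul_mul_comp_add_sq_le h₁ h₂ h₃)
  rw [← ENNReal.pow_le_pow_left_iff two_ne_zero]
  calc _ ≤ _ := h_sq
    _ ≤ μ.prod μ s ^ (1 / 2 : ℝ) * (eLpNorm f₁ 2 μ * eLpNorm f₂ 2 μ) *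
          (eLpNorm f₁ 2 μ * eLpNorm f₂ 2 μ * eLpNorm f₃ 2 μ ^ 2) := by
        gcongr
    _ = _ := by
        rw [mul_pow, ← ENNReal.rpow_natCast (μ.prod μ s ^ _), ← ENNReal.rpow_mul]
        norm_num
        ring

theorem setLIntegral_prod_mul_mul_comp_add_le (h₁ : AEMeasurable f₁ μ) (h₂ : AEMeasurable f₂ μ)
    (h₃ : AEMeasurable f₃ μ) (s : Set (G × G)) :
    ∫⁻ p in s, f₁ p.1 * f₂ p.2 * f₃ (p.1 + p.2) ∂μ.prod μ ≤
      μ.prod μ s ^ (1 / 4 : ℝ) * (eLpNorm f₁ 2 μ * eLpNorm f₂ 2 μ * eLpNorm f₃ 2 μ) := by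
  have h_add : Measure.QuasiMeasurePreserving (fun p : G × G ↦ p.1 + p.2) (μ.prod μ) μ :=
    Measure.quasiMeasurePreserving_snd.comp (measurePreserving_prod_add μ μ).quasiMeasurePreserving
  have h_ae : (fun p : G × G ↦ f₁ p.1 * f₂ p.2 * f₃ (p.1 + p.2)) =ᵐ[μ.prod μ]
      fun p ↦ h₁.mk f₁ p.1 * h₂.mk f₂ p.2 * h₃.mk f₃ (p.1 + p.2) := by
    filter_upwards [Measure.quasiMeasurePreserving_fst.ae_eq_comp h₁.ae_eq_mk,
      Measure.quasiMeasurePreserving_snd.ae_eq_comp h₂.ae_eq_mk, h_add.ae_eq_comp h₃.ae_eq_mk]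
      with p e₁ e₂ e₃
    simp only [Function.comp_apply] at e₁ e₂ e₃
    rw [e₁, e₂, e₃]
  rw [lintegral_congr_ae (ae_restrict_of_ae h_ae), eLpNorm_congr_ae h₁.ae_eq_mk,
    eLpNorm_congr_ae h₂.ae_eq_mk, eLpNorm_congr_ae h₃.ae_eq_mk]
  exact setLIntegral_prod_mul_mul_comp_add_le_of_measurable h₁.measurable_mk h₂.measurable_mk
    h₃.measurable_mk s

end Convolution

theorem stmt_14_general (g₁ g₂ g₃ : ℝ → ℝ)
    (h₁ : MemLp g₁ 2 volume) (h₂ : MemLp g₂ 2 volume) (h₃ : MemLp g₃ 2 volume)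
    (E : Set (ℝ × ℝ)) (hEfin : volume E < ⊤) :
    (∫ p in E, g₁ p.1 * g₂ p.2 * g₃ (p.1 + p.2)) ≤
      (volume E).toReal ^ ((1 : ℝ) / 4) * ((eLpNorm g₁ 2 volume).toReal *
        (eLpNorm g₂ 2 volume).toReal * (eLpNorm g₃ 2 volume).toReal) := by
  have h_bound := setLIntegral_prod_mul_mul_comp_add_le (μ := volume)
    h₁.aemeasurable.enorm h₂.aemeasurable.enorm h₃.aemeasurable.enorm E
  simp only [eLpNorm_enorm, ← Measure.volume_eq_prod, ← enorm_mul] at h_bound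
  have h_fin : volume E ^ (1 / 4 : ℝ) * (eLpNorm g₁ 2 volume * eLpNorm g₂ 2 volume *
      eLpNorm g₃ 2 volume) ≠ ⊤ := by
    have := hEfin.ne
    have := h₁.eLpNorm_ne_top
    have := h₂.eLpNorm_ne_top
    have := h₃.eLpNorm_ne_top
    finiteness
  calc ∫ p in E, g₁ p.1 * g₂ p.2 * g₃ (p.1 + p.2)
      ≤ ‖∫ p in E, g₁ p.1 * g₂ p.2 * g₃ (p.1 + p.2)‖ := Real.le_norm_self _
    _ ≤ (∫⁻ p in E, ‖g₁ p.1 * g₂ p.2 * g₃ (p.1 + p.2)‖ₑ).toReal := by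
        simpa only [ofReal_norm] using
          norm_integral_le_lintegral_norm fun p : ℝ × ℝ ↦ g₁ p.1 * g₂ p.2 * g₃ (p.1 + p.2)
    _ ≤ _ := ENNReal.toReal_mono h_fin h_bound
    _ = _ := by simp only [ENNReal.toReal_mul, ENNReal.toReal_rpow]

/-- the Hölder/Young step in the proof of Lemma "first": for nonnegative
`g₁, g₂, g₃ ∈ L²(ℝ)` and a measurable set `E ⊆ ℝ²` of finite measure,
`∬_E g₁(x)g₂(y)g₃(x+y) dx dy ≤ |E|^{1/4} ‖g₁‖₂ ‖g₂‖₂ ‖g₃‖₂`. -/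
theorem stmt_14 (g₁ g₂ g₃ : ℝ → ℝ)
    (h₁ : MemLp g₁ 2 volume) (h₂ : MemLp g₂ 2 volume) (h₃ : MemLp g₃ 2 volume)
    (hn₁ : ∀ x, 0 ≤ g₁ x) (hn₂ : ∀ x, 0 ≤ g₂ x) (hn₃ : ∀ x, 0 ≤ g₃ x)
    (E : Set (ℝ × ℝ)) (hE : MeasurableSet E) (hEfin : volume E < ⊤) :
    (∫ p in E, g₁ p.1 * g₂ p.2 * g₃ (p.1 + p.2)) ≤
      (volume E).toReal ^ ((1 : ℝ) / 4) * ((eLpNorm g₁ 2 volume).toReal *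
        (eLpNorm g₂ 2 volume).toReal * (eLpNorm g₃ 2 volume).toReal) :=
  stmt_14_general g₁ g₂ g₃ h₁ h₂ h₃ E hEfin
end

section
/- Let d ≥ 1 and D ≥ 1 be integers. There exist constants γ > 0 and C < ∞ depending only on d (with C also allowed to depend on D) with the following property. Let P : ℝ² → ℝ^D be a vector-valued polynomial of degree ≤ d, let f, g : [0,1] → ℝ^D be measurable, and let E ⊆ [0,1]² be a measurable set such that |f(x) + g(y) + P(x,y)| ≤ 1 for all (x,y) ∈ E. Define A := inf over ℝ^D-valued polynomials p, q of degree ≤ d of sup_{(x,y)∈[0,1]²} |P(x,y) − p(x) − q(y)|. Then |E| ≤ C A^{-γ}. -/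
/-!
Choose `a, b` such that the set `G` of points `(x, y) ∈ E` whose rectangle partners
`(a, y)`, `(x, b)`, `(a, b)` also lie in `E` has measure at least `|E|⁴`: the average over `a`
of `|{(x, y) ∈ E | (a, y) ∈ E}|` is `∫ |E^y|² dy ≥ |E|²` by Cauchy–Schwarz, and the same
argument is then repeated in the other variable. On `G` the mixed difference
`P(x,y) - P(x,b) - P(a,y) + P(a,b)` coincides with the mixed difference of
`f(x) + g(y) + P(x,y)`, so it is at most `4`. It has the form `P(x,y) - p(x) - q(y)` and is a
polynomial of degree `≤ d` in each variable, so a Remez-type inequality (Lagrange interpolation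
at `d + 1` well-separated points of a large set, used in `y` on the long rows of `G` and then in
`x`) bounds it on all of `[0,1]²` by `O_d(|E|^{-8d})`. Thus `A ≤ C |E|^{-8d}`, and since
`|E| ≤ 1` the exponent `γ = 1 / (8(d+1))` works.
-/

open MeasureTheory

open Set Polynomial
open scoped ENNReal

def IsPolyDegLE (d : ℕ) (F : ℝ → ℝ) : Prop :=
  ∃ p : ℝ[X], p.natDegree ≤ d ∧ ∀ x, F x = p.eval x

theorem isPolyDegLE_const (d : ℕ) (c : ℝ) : IsPolyDegLE d fun _ => c :=
  ⟨C c, by simp, by simp⟩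

theorem IsPolyDegLE.sub {d : ℕ} {F G : ℝ → ℝ} (hF : IsPolyDegLE d F) (hG : IsPolyDegLE d G) :
    IsPolyDegLE d fun x => F x - G x := by
  obtain ⟨p, hp, hpF⟩ := hF
  obtain ⟨q, hq, hqG⟩ := hG
  exact ⟨p - q, (natDegree_sub_le p q).trans (max_le hp hq), by simp [hpF, hqG]⟩

theorem MvPolynomial.exists_natDegree_le_eval_update {σ R : Type*} [CommSemiring R]
    [DecidableEq σ]
    (P : MvPolynomial σ R) (a : σ) (v : σ → R) :
    ∃ p : R[X], p.natDegree ≤ P.degreeOf a ∧ ∀ t, p.eval t = eval (Function.update v a t) P := by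
  set e := Equiv.optionSubtypeNe a
  refine ⟨(optionEquivLeft R _ (rename e.symm P)).map (eval fun b : {b // b ≠ a} => v b), ?_,
    fun t => ?_⟩
  · rw [degreeOf_eq_natDegree]
    exact natDegree_map_le
  · rw [← optionEquivLeft_elim_eval, eval_rename]
    congr 2
    funext b
    by_cases hb : b = a
    · subst hb; simp [e]
    · simp [e, hb, Equiv.optionSubtypeNe_symm_apply]

theorem isPolyDegLE_eval_update {σ : Type*} [DecidableEq σ] {d : ℕ} {P : MvPolynomial σ ℝ}
    {i : σ} (hP : P.degreeOf i ≤ d) (v : σ → ℝ) :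
    IsPolyDegLE d fun t => MvPolynomial.eval (Function.update v i t) P := by
  obtain ⟨p, hp, hpP⟩ := P.exists_natDegree_le_eval_update i v
  exact ⟨p, hp.trans hP, fun t => (hpP t).symm⟩

theorem isPolyDegLE_eval_fst {d : ℕ} {P : MvPolynomial (Fin 2) ℝ} (hP : P.totalDegree ≤ d)
    (y : ℝ) : IsPolyDegLE d fun x => MvPolynomial.eval ![x, y] P := by
  convert isPolyDegLE_eval_update ((P.degreeOf_le_totalDegree 0).trans hP) ![0, y] using 4
  funext i; fin_cases i <;> rfl

theorem isPolyDegLE_eval_snd {d : ℕ} {P : MvPolynomial (Fin 2) ℝ} (hP : P.totalDegree ≤ d)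
    (x : ℝ) : IsPolyDegLE d fun y => MvPolynomial.eval ![x, y] P := by
  convert isPolyDegLE_eval_update ((P.degreeOf_le_totalDegree 1).trans hP) ![x, 0] using 4
  funext i; fin_cases i <;> rfl

theorem abs_eval_le_of_separated {d : ℕ} {p : ℝ[X]} (hp : p.natDegree ≤ d)
    {v : Fin (d + 1) → ℝ} {δ R M t : ℝ} (hδ : 0 < δ) (hv : ∀ i j, i ≠ j → δ ≤ |v i - v j|)
    (hpv : ∀ i, |p.eval (v i)| ≤ M) (ht : ∀ j, |t - v j| ≤ R) :
    |p.eval t| ≤ (d + 1) * M * (R / δ) ^ d := by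
  have hinj : InjOn v (Finset.univ : Finset (Fin (d + 1))) := fun i _ j _ hij => by
    by_contra hne
    have := hv i j hne
    rw [hij, sub_self, abs_zero] at this
    linarith
  have hdeg : p.degree < (Finset.univ : Finset (Fin (d + 1))).card := by
    rw [Finset.card_univ, Fintype.card_fin]
    exact (degree_le_natDegree.trans (WithBot.coe_le_coe.2 hp)).trans_lt
      (WithBot.coe_lt_coe.2 d.lt_succ_self)
  have hbasis : ∀ i, |(Lagrange.basis Finset.univ v i).eval t| ≤ (R / δ) ^ d := by
    intro i
    rw [Lagrange.basis, eval_prod, Finset.abs_prod]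
    calc ∏ j ∈ Finset.univ.erase i, |(Lagrange.basisDivisor (v i) (v j)).eval t|
        ≤ ∏ _j ∈ Finset.univ.erase i, R / δ := by
          refine Finset.prod_le_prod (fun _ _ => abs_nonneg _) fun j hj => ?_
          rw [Lagrange.basisDivisor, eval_mul, eval_C, eval_sub, eval_X, eval_C, abs_mul,
            abs_inv, inv_mul_eq_div]
          exact div_le_div₀ ((abs_nonneg _).trans (ht j)) (ht j) hδ
            (hv i j (Finset.ne_of_mem_erase hj).symm)
      _ = (R / δ) ^ d := by
          rw [Finset.prod_const, Finset.card_erase_of_mem (Finset.mem_univ i)]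
          simp
  have hM : 0 ≤ M := (abs_nonneg _).trans (hpv 0)
  calc |p.eval t| = |∑ i, p.eval (v i) * (Lagrange.basis Finset.univ v i).eval t| := by
        conv_lhs => rw [Lagrange.eq_interpolate hinj hdeg]
        simp [Lagrange.interpolate_apply, eval_finsetSum]
    _ ≤ ∑ _i : Fin (d + 1), M * (R / δ) ^ d := by
        refine (Finset.abs_sum_le_sum_abs _ _).trans (Finset.sum_le_sum fun i _ => ?_)
        rw [abs_mul]
        exact mul_le_mul (hpv i) (hbasis i) (abs_nonneg _) hM
    _ = (d + 1) * M * (R / δ) ^ d := by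
        rw [Finset.sum_const, Finset.card_univ, Fintype.card_fin, nsmul_eq_mul]
        push_cast
        ring

theorem exists_separated_of_volume_lt (n : ℕ) {δ : ℝ} (hδ : 0 ≤ δ) {S : Set ℝ}
    (hS : ENNReal.ofReal (2 * n * δ) < volume S) :
    ∃ v : Fin (n + 1) → ℝ, (∀ i, v i ∈ S) ∧ ∀ i j, i ≠ j → δ ≤ |v i - v j| := by
  induction n generalizing S with
  | zero =>
    obtain ⟨x, hx⟩ := nonempty_of_measure_ne_zero (pos_of_gt hS).ne'
    exact ⟨fun _ => x, fun _ => hx, fun i j hij => (hij (Fin.ext (by omega))).elim⟩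
  | succ n ih =>
    obtain ⟨x, hx⟩ := nonempty_of_measure_ne_zero (pos_of_gt hS).ne'
    have hS' : ENNReal.ofReal (2 * n * δ) < volume (S \ Metric.closedBall x δ) := by
      have hcover : volume S ≤ volume (S \ Metric.closedBall x δ) + ENNReal.ofReal (2 * δ) := by
        rw [← Real.volume_closedBall x δ]
        exact (measure_mono (subset_sdiff_union S _)).trans (measure_union_le _ _)
      contrapose! hS
      calc volume S ≤ ENNReal.ofReal (2 * n * δ) + ENNReal.ofReal (2 * δ) :=
          hcover.trans (by gcongr)
        _ = ENNReal.ofReal (2 * (n + 1 : ℕ) * δ) := by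
          rw [← ENNReal.ofReal_add (by positivity) (by positivity)]
          push_cast
          ring_nf
    obtain ⟨v, hvS, hv⟩ := ih hS'
    have hfar : ∀ k, δ ≤ |x - v k| := fun k => by
      have := (hvS k).2
      rw [Metric.mem_closedBall, not_le, Real.dist_eq, abs_sub_comm] at this
      exact this.le
    refine ⟨Fin.cons x v, Fin.forall_fin_succ.2 ⟨hx, fun i => (hvS i).1⟩, ?_⟩
    intro i j hij
    cases i using Fin.cases <;> cases j using Fin.cases
    · exact absurd rfl hij
    · simpa using hfar _
    · simpa [abs_sub_comm] using hfar _
    · simpa using hv _ _ (fun h => hij (by rw [h]))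

theorem sq_lintegral_le_lintegral_sq {α : Type*} [MeasurableSpace α] {μ : Measure α}
    [IsProbabilityMeasure μ] {f : α → ℝ≥0∞} (hf : AEMeasurable f μ) :
    (∫⁻ x, f x ∂μ) ^ 2 ≤ ∫⁻ x, f x ^ 2 ∂μ := by
  have hCS := ENNReal.lintegral_mul_le_Lp_mul_Lq μ Real.HolderConjugate.two_two hf
    (aemeasurable_const (b := (1 : ℝ≥0∞)))
  simp only [Pi.mul_apply, mul_one, lintegral_const, measure_univ, ENNReal.rpow_two, one_pow,
    ENNReal.one_rpow] at hCS
  calc (∫⁻ x, f x ∂μ) ^ 2 ≤ ((∫⁻ x, f x ^ 2 ∂μ) ^ (1 / 2 : ℝ)) ^ 2 := by gcongr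
    _ = ∫⁻ x, f x ^ 2 ∂μ := by
        rw [← ENNReal.rpow_natCast, ← ENNReal.rpow_mul]
        norm_num

theorem lintegral_le_measure_le_add_of_le_one {α : Type*} [MeasurableSpace α] {μ : Measure α}
    [IsProbabilityMeasure μ] {f : α → ℝ≥0∞} (hf : Measurable f) (hf1 : ∀ x, f x ≤ 1)
    (c : ℝ≥0∞) : ∫⁻ x, f x ∂μ ≤ μ {x | c ≤ f x} + c := by
  have hs : MeasurableSet {x | c ≤ f x} := hf measurableSet_Ici
  calc ∫⁻ x, f x ∂μ ≤ ∫⁻ x, ({x | c ≤ f x}.indicator 1 x + c) ∂μ := by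
        refine lintegral_mono fun x => ?_
        by_cases hx : c ≤ f x
        · simpa [indicator_of_mem (show x ∈ {x | c ≤ f x} from hx)] using
            (hf1 x).trans le_self_add
        · simpa [indicator_of_notMem (show x ∉ {x | c ≤ f x} from hx)] using (not_le.1 hx).le
    _ = μ {x | c ≤ f x} + c := by
        rw [lintegral_add_right _ measurable_const, lintegral_indicator_one hs]
        simp

noncomputable abbrev unitVolume : Measure ℝ := volume.restrict (Icc 0 1)

instance : IsProbabilityMeasure unitVolume := ⟨by simp⟩

theorem abs_le_of_unitVolume_le {d : ℕ} {F : ℝ → ℝ} (hF : IsPolyDegLE d F) {S : Set ℝ}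
    {m M : ℝ} (hm : 0 < m) (hS : ENNReal.ofReal m ≤ unitVolume S) (hFS : ∀ x ∈ S, |F x| ≤ M)
    {t : ℝ} (ht : t ∈ Icc (0 : ℝ) 1) :
    |F t| ≤ (d + 1) * M * (2 * (d + 1) / m) ^ d := by
  obtain ⟨p, hp, hpF⟩ := hF
  set δ := m / (2 * (d + 1))
  have hlt : ENNReal.ofReal (2 * d * δ) < volume (S ∩ Icc 0 1) := by
    refine lt_of_lt_of_le ?_ ((Measure.restrict_apply' measurableSet_Icc).symm.trans_ge hS)
    rw [ENNReal.ofReal_lt_ofReal_iff hm]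
    have : 2 * d * δ = m * (d / (d + 1)) := by simp only [δ]; field_simp
    rw [this]
    exact mul_lt_of_lt_one_right hm ((div_lt_one (by positivity)).2 (by linarith))
  obtain ⟨v, hvS, hv⟩ := exists_separated_of_volume_lt d (by positivity) hlt
  have hvt : ∀ j, |t - v j| ≤ 1 := fun j => by
    have := (hvS j).2
    rw [abs_le]
    constructor <;> linarith [ht.1, ht.2, this.1, this.2]
  have := abs_eval_le_of_separated hp (by positivity) hv
    (fun i => (hpF (v i)) ▸ hFS _ (hvS i).1) hvt
  rwa [hpF, ← show 1 / δ = 2 * (d + 1) / m by simp only [δ]; field_simp]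

theorem abs_le_of_unitVolume_prod_le {d : ℕ} {F : ℝ → ℝ → ℝ}
    (hFx : ∀ y, IsPolyDegLE d fun x => F x y) (hFy : ∀ x, IsPolyDegLE d (F x))
    {G : Set (ℝ × ℝ)} (hG : MeasurableSet G) {m M : ℝ} (hm : 0 < m)
    (hGm : ENNReal.ofReal m ≤ unitVolume.prod unitVolume G) (hFG : ∀ z ∈ G, |F z.1 z.2| ≤ M)
    {x y : ℝ} (hx : x ∈ Icc (0 : ℝ) 1) (hy : y ∈ Icc (0 : ℝ) 1) :
    |F x y| ≤ (d + 1) ^ 2 * M * (4 * (d + 1) / m) ^ (2 * d) := by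
  set X := {x | ENNReal.ofReal (m / 2) ≤ unitVolume (Prod.mk x ⁻¹' G)}
  -- Rows have measure `≤ 1`, so by Fubini the long rows fill measure `≥ m / 2`.
  have hX : ENNReal.ofReal (m / 2) ≤ unitVolume X := by
    have hG' : ENNReal.ofReal (m / 2) + ENNReal.ofReal (m / 2) ≤
        unitVolume X + ENNReal.ofReal (m / 2) := by
      rw [← ENNReal.ofReal_add (by positivity) (by positivity), add_halves]
      refine hGm.trans ?_
      rw [Measure.prod_apply hG]
      exact lintegral_le_measure_le_add_of_le_one (measurable_measure_prodMk_left hG)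
        (fun _ => prob_le_one) _
    exact (ENNReal.add_le_add_iff_right ENNReal.ofReal_ne_top).1 hG'
  have hrow : ∀ x' ∈ X, |F x' y| ≤ (d + 1) * M * (2 * (d + 1) / (m / 2)) ^ d :=
    fun x' hx' => abs_le_of_unitVolume_le (hFy x') (half_pos hm) hx'
      (fun y' hy' => hFG (x', y') hy') hy
  calc |F x y|
      ≤ (d + 1) * ((d + 1) * M * (2 * (d + 1) / (m / 2)) ^ d) * (2 * (d + 1) / (m / 2)) ^ d :=
        abs_le_of_unitVolume_le (hFx y) (half_pos hm) hX hrow hx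
    _ = (d + 1) ^ 2 * M * (4 * (d + 1) / m) ^ (2 * d) := by
        rw [show 2 * ((d : ℝ) + 1) / (m / 2) = 4 * (d + 1) / m by field_simp; ring, two_mul,
          pow_add]
        ring

theorem measurableSet_fst_pair {α β : Type*} [MeasurableSpace α] [MeasurableSpace β]
    {E : Set (α × β)} (hE : MeasurableSet E) (a : α) :
    MeasurableSet {z | z ∈ E ∧ (a, z.2) ∈ E} :=
  hE.inter (hE.preimage (measurable_const.prodMk measurable_snd))

theorem lintegral_measure_prod_fst_pair {α β : Type*} [MeasurableSpace α] [MeasurableSpace β]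
    (μ : Measure α) (ν : Measure β) [SFinite μ] [SFinite ν] {E : Set (α × β)}
    (hE : MeasurableSet E) :
    ∫⁻ a, μ.prod ν {z | z ∈ E ∧ (a, z.2) ∈ E} ∂μ =
      ∫⁻ b, μ ((·, b) ⁻¹' E) ^ 2 ∂ν := by
  set g : β → ℝ≥0∞ := fun b => μ ((·, b) ⁻¹' E)
  have hg : Measurable g := measurable_measure_prodMk_right hE
  have hrow : ∀ a, μ.prod ν {z | z ∈ E ∧ (a, z.2) ∈ E} =
      ∫⁻ b, E.indicator (fun z => g z.2) (a, b) ∂ν := fun a => by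
    rw [Measure.prod_apply_symm (measurableSet_fst_pair hE a)]
    refine lintegral_congr fun b => ?_
    by_cases hab : (a, b) ∈ E <;> simp [hab, g, Set.preimage]
  calc ∫⁻ a, μ.prod ν {z | z ∈ E ∧ (a, z.2) ∈ E} ∂μ
      = ∫⁻ a, ∫⁻ b, E.indicator (fun z => g z.2) (a, b) ∂ν ∂μ := lintegral_congr hrow
    _ = ∫⁻ b, ∫⁻ a, E.indicator (fun z => g z.2) (a, b) ∂μ ∂ν :=
        lintegral_lintegral_swap ((hg.comp measurable_snd).indicator hE).aemeasurable
    _ = ∫⁻ b, g b ^ 2 ∂ν := by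
        refine lintegral_congr fun b => ?_
        rw [show (fun a => E.indicator (fun z => g z.2) (a, b)) = ((·, b) ⁻¹' E).indicator
          (fun _ => g b) from funext fun a => (indicator_comp_right (fun a => (a, b))).symm,
          lintegral_indicator_const (hE.preimage measurable_prodMk_right), sq]

section Pairs

variable {α β : Type*} [MeasurableSpace α] [MeasurableSpace β] (μ : Measure α) (ν : Measure β)
  [IsProbabilityMeasure μ] [IsProbabilityMeasure ν]

theorem exists_sq_measure_le_measure_fst_pair {E : Set (α × β)} (hE : MeasurableSet E) :
    ∃ a, μ.prod ν E ^ 2 ≤ μ.prod ν {z | z ∈ E ∧ (a, z.2) ∈ E} := by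
  have hfin : ∫⁻ a, μ.prod ν {z | z ∈ E ∧ (a, z.2) ∈ E} ∂μ ≠ ∞ :=
    ne_top_of_le_ne_top ENNReal.one_ne_top
      ((lintegral_mono fun _ => prob_le_one).trans_eq (by simp))
  obtain ⟨a, ha⟩ := exists_lintegral_le hfin
  refine ⟨a, le_trans ?_ ha⟩
  rw [lintegral_measure_prod_fst_pair μ ν hE, Measure.prod_apply_symm hE]
  exact sq_lintegral_le_lintegral_sq (measurable_measure_prodMk_right hE).aemeasurable

theorem exists_sq_measure_le_measure_snd_pair {E : Set (α × β)} (hE : MeasurableSet E) :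
    ∃ b, μ.prod ν E ^ 2 ≤ μ.prod ν {z | z ∈ E ∧ (z.1, b) ∈ E} := by
  have hswap : ∀ S, MeasurableSet S → ν.prod μ (Prod.swap ⁻¹' S) = μ.prod ν S := fun S hS =>
    (Measure.measurePreserving_swap).measure_preimage hS.nullMeasurableSet
  obtain ⟨b, hb⟩ := exists_sq_measure_le_measure_fst_pair ν μ (hE.preimage measurable_swap)
  refine ⟨b, ?_⟩
  have hW : MeasurableSet {z : α × β | z ∈ E ∧ (z.1, b) ∈ E} :=
    hE.inter (hE.preimage (measurable_fst.prodMk measurable_const))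
  rw [← hswap _ hE, ← hswap _ hW]
  exact hb

theorem exists_pow_four_le_measure_corners {E : Set (α × β)} (hE : MeasurableSet E) :
    ∃ a b, μ.prod ν E ^ 4 ≤
      μ.prod ν {z | z ∈ E ∧ (a, z.2) ∈ E ∧ (z.1, b) ∈ E ∧ (a, b) ∈ E} := by
  obtain ⟨a, ha⟩ := exists_sq_measure_le_measure_fst_pair μ ν hE
  obtain ⟨b, hb⟩ := exists_sq_measure_le_measure_snd_pair μ ν (measurableSet_fst_pair hE a)
  refine ⟨a, b, ?_⟩
  calc μ.prod ν E ^ 4 = (μ.prod ν E ^ 2) ^ 2 := by rw [← pow_mul]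
    _ ≤ μ.prod ν {z | z ∈ E ∧ (a, z.2) ∈ E} ^ 2 := by gcongr
    _ ≤ _ := hb
    _ = _ := by
        congr 1
        ext z
        exact ⟨fun ⟨⟨h₁, h₂⟩, h₃, h₄⟩ => ⟨h₁, h₂, h₃, h₄⟩,
          fun ⟨h₁, h₂, h₃, h₄⟩ => ⟨⟨h₁, h₂⟩, h₃, h₄⟩⟩

end Pairs

theorem unitVolume_prod_apply {E : Set (ℝ × ℝ)} (hE : E ⊆ Icc 0 1 ×ˢ Icc 0 1) :
    unitVolume.prod unitVolume E = volume E := by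
  rw [Measure.prod_restrict, ← Measure.volume_eq_prod,
    Measure.restrict_apply' (measurableSet_Icc.prod measurableSet_Icc), inter_eq_left.2 hE]

theorem exists_approx_of_abs_add_le_one {d : ℕ} {P : MvPolynomial (Fin 2) ℝ}
    (hP : P.totalDegree ≤ d) (f g : ℝ → ℝ) {E : Set (ℝ × ℝ)} (hE : MeasurableSet E)
    (hEI : E ⊆ Icc 0 1 ×ˢ Icc 0 1)
    (hfg : ∀ z ∈ E, |f z.1 + g z.2 + MvPolynomial.eval ![z.1, z.2] P| ≤ 1)
    {e : ℝ} (he : 0 < e) (heE : ENNReal.ofReal e ≤ volume E) :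
    ∃ p q : ℝ[X], p.natDegree ≤ d ∧ q.natDegree ≤ d ∧ ∀ x ∈ Icc (0 : ℝ) 1, ∀ y ∈ Icc (0 : ℝ) 1,
      |MvPolynomial.eval ![x, y] P - p.eval x - q.eval y| ≤
        (d + 1) ^ 2 * 4 * (4 * (d + 1) / e ^ 4) ^ (2 * d) := by
  obtain ⟨a, b, hab⟩ := exists_pow_four_le_measure_corners unitVolume unitVolume hE
  set G := {z : ℝ × ℝ | z ∈ E ∧ (a, z.2) ∈ E ∧ (z.1, b) ∈ E ∧ (a, b) ∈ E}
  have hG : MeasurableSet G :=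
    hE.inter ((hE.preimage (measurable_const.prodMk measurable_snd)).inter
      ((hE.preimage (measurable_fst.prodMk measurable_const)).inter (.const ((a, b) ∈ E))))
  obtain ⟨p, hp, hpP⟩ := isPolyDegLE_eval_fst hP b
  obtain ⟨q, hq, hqP⟩ := isPolyDegLE_eval_snd hP a
  set c := MvPolynomial.eval ![a, b] P
  refine ⟨p - C c, q, (natDegree_sub_C).trans_le hp, hq, fun x hx y hy => ?_⟩
  refine abs_le_of_unitVolume_prod_le
    (F := fun x y => MvPolynomial.eval ![x, y] P - (p - C c).eval x - q.eval y)
    (fun y => ((isPolyDegLE_eval_fst hP y).sub ⟨p - C c, (natDegree_sub_C).trans_le hp,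
      fun _ => rfl⟩).sub (isPolyDegLE_const d _))
    (fun x => ((isPolyDegLE_eval_snd hP x).sub (isPolyDegLE_const d _)).sub
      ⟨q, hq, fun _ => rfl⟩)
    hG (by positivity) ?_ ?_ hx hy
  · calc ENNReal.ofReal (e ^ 4) = ENNReal.ofReal e ^ 4 := ENNReal.ofReal_pow he.le 4
      _ ≤ volume E ^ 4 := by gcongr
      _ ≤ _ := unitVolume_prod_apply hEI ▸ hab
  · rintro ⟨x, y⟩ ⟨h₁, h₂, h₃, h₄⟩
    have k₁ := abs_le.1 (hfg _ h₁)
    have k₂ := abs_le.1 (hfg _ h₂)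
    have k₃ := abs_le.1 (hfg _ h₃)
    have k₄ := abs_le.1 (hfg _ h₄)
    simp only [eval_sub, eval_C, ← hpP, ← hqP] at k₁ k₂ k₃ k₄ ⊢
    rw [abs_le]
    constructor <;> linarith

theorem abs_le_euclNorm {D : ℕ} (v : Fin D → ℝ) (i : Fin D) : |v i| ≤ euclNorm v := by
  rw [euclNorm, ← Real.sqrt_sq_eq_abs]
  exact Real.sqrt_le_sqrt
    (Finset.single_le_sum (fun j _ => sq_nonneg (v j)) (Finset.mem_univ i))

theorem euclNorm_le_sqrt_mul {D : ℕ} {v : Fin D → ℝ} {B : ℝ} (hB : 0 ≤ B)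
    (h : ∀ i, |v i| ≤ B) : euclNorm v ≤ √D * B := by
  rw [euclNorm, ← Real.sqrt_sq hB, ← Real.sqrt_mul (Nat.cast_nonneg D)]
  refine Real.sqrt_le_sqrt ?_
  calc ∑ i, v i ^ 2 ≤ ∑ _i : Fin D, B ^ 2 :=
        Finset.sum_le_sum fun i _ => sq_le_sq' (abs_le.1 (h i)).1 (abs_le.1 (h i)).2
    _ = D * B ^ 2 := by simp

noncomputable def supNormOnSquare {D : ℕ} (F : ℝ → ℝ → Fin D → ℝ) : ℝ :=
  sSup {s : ℝ | ∃ x ∈ Icc (0 : ℝ) 1, ∃ y ∈ Icc (0 : ℝ) 1, s = euclNorm (F x y)}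

theorem supNormOnSquare_nonneg {D : ℕ} (F : ℝ → ℝ → Fin D → ℝ) : 0 ≤ supNormOnSquare F := by
  refine Real.sSup_nonneg ?_
  rintro s ⟨x, -, y, -, rfl⟩
  exact Real.sqrt_nonneg _

theorem supNormOnSquare_le {D : ℕ} {F : ℝ → ℝ → Fin D → ℝ} {B : ℝ} (hB : 0 ≤ B)
    (h : ∀ x ∈ Icc (0 : ℝ) 1, ∀ y ∈ Icc (0 : ℝ) 1, euclNorm (F x y) ≤ B) :
    supNormOnSquare F ≤ B := by
  refine Real.sSup_le ?_ hB
  rintro s ⟨x, hx, y, hy, rfl⟩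
  exact h x hx y hy

noncomputable def sumApproxError (d : ℕ) {D : ℕ} (P : Fin D → MvPolynomial (Fin 2) ℝ) : ℝ :=
  sInf {r : ℝ | ∃ p q : Fin D → ℝ[X], (∀ i, (p i).natDegree ≤ d) ∧ (∀ i, (q i).natDegree ≤ d) ∧
    r = supNormOnSquare fun x y i =>
      MvPolynomial.eval ![x, y] (P i) - (p i).eval x - (q i).eval y}

theorem sumApproxError_nonneg (d : ℕ) {D : ℕ} (P : Fin D → MvPolynomial (Fin 2) ℝ) :
    0 ≤ sumApproxError d P := by
  refine Real.sInf_nonneg ?_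
  rintro r ⟨p, q, -, -, rfl⟩
  exact supNormOnSquare_nonneg _

theorem sumApproxError_le {d D : ℕ} {P : Fin D → MvPolynomial (Fin 2) ℝ}
    {p q : Fin D → ℝ[X]} (hp : ∀ i, (p i).natDegree ≤ d) (hq : ∀ i, (q i).natDegree ≤ d)
    {B : ℝ} (hB : 0 ≤ B) (h : ∀ i, ∀ x ∈ Icc (0 : ℝ) 1, ∀ y ∈ Icc (0 : ℝ) 1,
      |MvPolynomial.eval ![x, y] (P i) - (p i).eval x - (q i).eval y| ≤ B) :
    sumApproxError d P ≤ √D * B := by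
  calc sumApproxError d P
      ≤ supNormOnSquare fun x y i =>
          MvPolynomial.eval ![x, y] (P i) - (p i).eval x - (q i).eval y := by
        refine csInf_le ⟨0, ?_⟩ ⟨p, q, hp, hq, rfl⟩
        rintro r ⟨p, q, -, -, rfl⟩
        exact supNormOnSquare_nonneg _
    _ ≤ √D * B := supNormOnSquare_le (by positivity) fun x hx y hy =>
        euclNorm_le_sqrt_mul hB fun i => h i x hx y hy

theorem mul_rpow_inv_le_of_mul_pow_le {e A K : ℝ} {n : ℕ} (hn : n ≠ 0) (he : 0 ≤ e)
    (hA : 0 ≤ A) (h : A * e ^ n ≤ K) : e * A ^ (n⁻¹ : ℝ) ≤ K ^ (n⁻¹ : ℝ) := by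
  calc e * A ^ (n⁻¹ : ℝ) = (A * e ^ n) ^ (n⁻¹ : ℝ) := by
        rw [Real.mul_rpow hA (by positivity), Real.pow_rpow_inv_natCast he hn, mul_comm]
    _ ≤ K ^ (n⁻¹ : ℝ) := by gcongr

theorem stmt_17_general (d : ℕ) :
    ∃ γ : ℝ, 0 < γ ∧
      ∀ D : ℕ, 1 ≤ D →
        ∃ C : ℝ,
          ∀ P : Fin D → MvPolynomial (Fin 2) ℝ, (∀ i, (P i).totalDegree ≤ d) →
            ∀ f g : ℝ → (Fin D → ℝ), Measurable f → Measurable g →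
              ∀ E : Set (ℝ × ℝ), MeasurableSet E →
                E ⊆ Set.Icc (0 : ℝ) 1 ×ˢ Set.Icc (0 : ℝ) 1 →
                (∀ p ∈ E, euclNorm (fun i =>
                    f p.1 i + g p.2 i + MvPolynomial.eval ![p.1, p.2] (P i)) ≤ 1) →
                (volume E).toReal *
                    (sInf { r : ℝ | ∃ p q : Fin D → Polynomial ℝ,
                      (∀ i, (p i).natDegree ≤ d) ∧ (∀ i, (q i).natDegree ≤ d) ∧
                      r = sSup { s : ℝ | ∃ x ∈ Set.Icc (0 : ℝ) 1, ∃ y ∈ Set.Icc (0 : ℝ) 1,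
                        s = euclNorm (fun i => MvPolynomial.eval ![x, y] (P i)
                          - (p i).eval x - (q i).eval y) } }) ^ γ
                  ≤ C := by
  set n := 8 * (d + 1)
  refine ⟨(n : ℝ)⁻¹, by positivity, fun D _ => ?_⟩
  refine ⟨(√D * ((d + 1) ^ 2 * 4 * (4 * (d + 1)) ^ (2 * d))) ^ (n⁻¹ : ℝ), ?_⟩
  intro P hP f g _ _ E hE hEI hfg
  show (volume E).toReal * sumApproxError d P ^ (n⁻¹ : ℝ) ≤ _
  obtain he | he := (ENNReal.toReal_nonneg (a := volume E)).eq_or_lt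
  · rw [← he, zero_mul]
    positivity
  have he1 : (volume E).toReal ≤ 1 := by
    refine ENNReal.toReal_le_of_le_ofReal zero_le_one ?_
    rw [← unitVolume_prod_apply hEI, ENNReal.ofReal_one]
    exact prob_le_one
  choose p q hp hq hpq using fun i => exists_approx_of_abs_add_le_one (hP i) (f · i) (g · i)
    hE hEI (fun z hz => (abs_le_euclNorm _ i).trans (hfg z hz)) he ENNReal.ofReal_toReal_le
  set e := (volume E).toReal
  refine mul_rpow_inv_le_of_mul_pow_le (by positivity) he.le (sumApproxError_nonneg d P) ?_
  calc sumApproxError d P * e ^ n ≤ sumApproxError d P * e ^ (8 * d) :=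
        mul_le_mul_of_nonneg_left (pow_le_pow_of_le_one he.le he1 (by omega))
          (sumApproxError_nonneg d P)
    _ ≤ √D * ((d + 1) ^ 2 * 4 * (4 * (d + 1) / e ^ 4) ^ (2 * d)) * e ^ (8 * d) := by
        gcongr
        exact sumApproxError_le hp hq (by positivity) hpq
    _ = √D * ((d + 1) ^ 2 * 4 * (4 * (d + 1)) ^ (2 * d)) := by
        rw [div_pow, ← pow_mul, show 4 * (2 * d) = 8 * d by ring]
        field_simp

/-- sublevel-set estimate used in the proof of Lemma "cousin": if
`|f(x) + g(y) + P(x,y)| ≤ 1` on `E ⊆ [0,1]²`, and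
`A := inf_{p,q} sup_{(x,y)∈[0,1]²} |P(x,y) − p(x) − q(y)|` over `ℝ^D`-valued one-variable
polynomials `p, q` of degree `≤ d`, then `|E| ≤ C·A^{-γ}` with `γ` depending only on `d`.
(The conclusion is stated in the equivalent product form `|E|·A^γ ≤ C`, which avoids the
rpow convention `0^{-γ} = 0`.) -/
theorem stmt_17 (d : ℕ) (hd : 1 ≤ d) :
    ∃ γ : ℝ, 0 < γ ∧
      ∀ D : ℕ, 1 ≤ D →
        ∃ C : ℝ,
          ∀ P : Fin D → MvPolynomial (Fin 2) ℝ, (∀ i, (P i).totalDegree ≤ d) →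
            ∀ f g : ℝ → (Fin D → ℝ), Measurable f → Measurable g →
              ∀ E : Set (ℝ × ℝ), MeasurableSet E →
                E ⊆ Set.Icc (0 : ℝ) 1 ×ˢ Set.Icc (0 : ℝ) 1 →
                (∀ p ∈ E, euclNorm (fun i =>
                    f p.1 i + g p.2 i + MvPolynomial.eval ![p.1, p.2] (P i)) ≤ 1) →
                (volume E).toReal *
                    (sInf { r : ℝ | ∃ p q : Fin D → Polynomial ℝ,
                      (∀ i, (p i).natDegree ≤ d) ∧ (∀ i, (q i).natDegree ≤ d) ∧
                      r = sSup { s : ℝ | ∃ x ∈ Set.Icc (0 : ℝ) 1, ∃ y ∈ Set.Icc (0 : ℝ) 1,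
                        s = euclNorm (fun i => MvPolynomial.eval ![x, y] (P i)
                          - (p i).eval x - (q i).eval y) } }) ^ γ
                  ≤ C :=
  stmt_17_general d
end
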